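/- For every ε > 0 there exists a constant C₁* > 0, depending only on ε, a₁, a₂, b₁, b₂, c₁, c₂, γ, δ, such that for every d ≥ ε and every solution (w, τ) of the one-dimensional limiting system with diffusion coefficient d, one has max_{x ∈ [0,1]} |w(x)| + max_{x ∈ [0,1]} |w'(x)| ≤ C₁*. -/

import Mathlib

/-!
Write `u = U(w, τ)`. Then `w = δ u - γ τ / u`, so `u` is an increasing function of `w`, and with
`q = γ τ / u` the nonlinearity reads `h = u (a₁ - b₁ u) - c₁ τ - q (a₂ - b₂ u - (c₂ / γ) q)`.
Since `u (a₁ - b₁ u) ≤ a₁² / (4 b₁)`, the integral constraint bounds `τ`. By the Neumann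
conditions `w'' ≤ 0` at a maximum point of `w`, so `h ≥ 0` there, which bounds `u` at that point
and hence everywhere; at a minimum point `h ≤ 0`, which bounds `q` there and hence `w` from
below. Then `q = δ u - w` is bounded everywhere, so is `h = -d w''`, and `w'(0) = 0` bounds `w'`.
-/

open Set

/-- The nonlinearity `h(u,τ) = u(a₁ − b₁u) − c₁τ − (γτ/u)(a₂ − b₂u − c₂τ/u)`. -/
noncomputable def hfun (a₁ a₂ b₁ b₂ c₁ c₂ γ : ℝ) (u τ : ℝ) : ℝ :=
  u * (a₁ - b₁ * u) - c₁ * τ - (γ * τ / u) * (a₂ - b₂ * u - c₂ * τ / u)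

/-- The change of variables `U(w,τ) = (√(w² + 4γδτ) + w)/(2δ)`. -/
noncomputable def Ufun (γ δ : ℝ) (w τ : ℝ) : ℝ :=
  (Real.sqrt (w ^ 2 + 4 * γ * δ * τ) + w) / (2 * δ)

lemma le_max_one_of_mul_pow_le_sum {n : ℕ} {b x : ℝ} {c : Fin n → ℝ} (hb : 0 < b)
    (hc : ∀ k, 0 ≤ c k) (h : b * x ^ n ≤ ∑ k, c k * x ^ (k : ℕ)) :
    x ≤ max 1 ((∑ k, c k) / b) := by
  by_contra! hx
  have hx1 : 1 < x := (le_max_left _ _).trans_lt hx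
  have hxS : (∑ k, c k) / b < x := (le_max_right _ _).trans_lt hx
  obtain _ | m := n
  · simp only [pow_zero, mul_one, Finset.univ_eq_empty, Finset.sum_empty] at h
    linarith
  have hsum : ∑ k : Fin (m + 1), c k * x ^ (k : ℕ) ≤ (∑ k, c k) * x ^ m := by
    rw [Finset.sum_mul]
    gcongr with k
    · exact hc k
    · exact hx1.le
    · exact Nat.lt_succ_iff.mp k.isLt
  have hxm : 0 < x ^ m := by positivity
  rw [div_lt_iff₀ hb] at hxS
  nlinarith [h.trans hsum, pow_succ x m]

section

variable {γ δ τ : ℝ}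

lemma Ufun_pos (hγ : 0 < γ) (hδ : 0 < δ) (hτ : 0 < τ) (w : ℝ) : 0 < Ufun γ δ w τ := by
  have habs : |w| < Real.sqrt (w ^ 2 + 4 * γ * δ * τ) := by
    rw [← Real.sqrt_sq_eq_abs]
    exact Real.sqrt_lt_sqrt (sq_nonneg w) (by nlinarith [mul_pos (mul_pos hγ hδ) hτ])
  exact div_pos (by linarith [neg_abs_le w]) (by positivity)

lemma mul_Ufun_sub_div_Ufun (hγ : 0 < γ) (hδ : 0 < δ) (hτ : 0 < τ) (w : ℝ) :
    δ * Ufun γ δ w τ - γ * τ / Ufun γ δ w τ = w := by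
  have hU := Ufun_pos hγ hδ hτ w
  have hs := Real.sq_sqrt (by nlinarith [mul_pos (mul_pos hγ hδ) hτ] :
    (0 : ℝ) ≤ w ^ 2 + 4 * γ * δ * τ)
  rw [sub_eq_iff_eq_add, ← sub_eq_iff_eq_add', eq_div_iff hU.ne']
  unfold Ufun
  generalize Real.sqrt (w ^ 2 + 4 * γ * δ * τ) = s at hs
  field_simp
  linear_combination hs

lemma Ufun_monotone (hγ : 0 < γ) (hδ : 0 < δ) (hτ : 0 < τ) :
    Monotone fun w => Ufun γ δ w τ := by
  intro w₁ w₂ hw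
  by_contra! hlt
  have hdiv : γ * τ / Ufun γ δ w₁ τ < γ * τ / Ufun γ δ w₂ τ :=
    div_lt_div_of_pos_left (by positivity) (Ufun_pos hγ hδ hτ w₂) hlt
  linarith [mul_Ufun_sub_div_Ufun hγ hδ hτ w₁, mul_Ufun_sub_div_Ufun hγ hδ hτ w₂,
    mul_lt_mul_of_pos_left hlt hδ]

lemma continuous_Ufun : Continuous fun w => Ufun γ δ w τ := by
  unfold Ufun
  fun_prop

end

section

variable {a₁ a₂ b₁ b₂ c₁ c₂ γ u τ : ℝ}

lemma hfun_mul_sq (hu : u ≠ 0) :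
    hfun a₁ a₂ b₁ b₂ c₁ c₂ γ u τ * u ^ 2 =
      a₁ * u ^ 3 - b₁ * u ^ 4 - c₁ * τ * u ^ 2 - γ * a₂ * τ * u
        + γ * b₂ * τ * u ^ 2 + γ * c₂ * τ ^ 2 := by
  unfold hfun; field_simp; ring

lemma hfun_eq (hγ : γ ≠ 0) :
    hfun a₁ a₂ b₁ b₂ c₁ c₂ γ u τ =
      u * (a₁ - b₁ * u) - c₁ * τ - (γ * τ / u) * (a₂ - b₂ * u - c₂ / γ * (γ * τ / u)) := by
  unfold hfun; field_simp

lemma le_of_hfun_nonneg {T : ℝ} (ha₁ : 0 < a₁) (ha₂ : 0 < a₂) (hb₁ : 0 < b₁) (hb₂ : 0 < b₂)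
    (hc₁ : 0 < c₁) (hc₂ : 0 < c₂) (hγ : 0 < γ) (hu : 0 < u) (hτ : 0 < τ) (hτT : τ ≤ T)
    (h : 0 ≤ hfun a₁ a₂ b₁ b₂ c₁ c₂ γ u τ) :
    u ≤ max 1 ((γ * c₂ * T ^ 2 + γ * b₂ * T + a₁) / b₁) := by
  have hpoly := mul_nonneg h (sq_nonneg u)
  rw [hfun_mul_sq hu.ne'] at hpoly
  have hT : 0 < T := hτ.trans_le hτT
  have key : b₁ * u ^ 4 ≤ γ * c₂ * T ^ 2 + γ * b₂ * T * u ^ 2 + a₁ * u ^ 3 := by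
    have h1 : γ * b₂ * τ * u ^ 2 ≤ γ * b₂ * T * u ^ 2 := by gcongr
    have h2 : γ * c₂ * τ ^ 2 ≤ γ * c₂ * T ^ 2 := by gcongr
    nlinarith [mul_pos (mul_pos hγ ha₂) (mul_pos hτ hu), mul_pos hc₁ (mul_pos hτ (pow_pos hu 2))]
  have := le_max_one_of_mul_pow_le_sum (c := ![γ * c₂ * T ^ 2, 0, γ * b₂ * T, a₁]) hb₁
    (fun k => by fin_cases k <;> dsimp <;> positivity) (by simpa [Fin.sum_univ_four] using key)
  simpa [Fin.sum_univ_four] using this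

lemma div_le_of_hfun_nonpos {M T : ℝ} (ha₁ : 0 < a₁) (ha₂ : 0 < a₂) (hb₁ : 0 < b₁)
    (hb₂ : 0 < b₂) (hc₁ : 0 < c₁) (hc₂ : 0 < c₂) (hγ : 0 < γ) (hu : 0 < u) (huM : u ≤ M)
    (hτ : 0 < τ) (hτT : τ ≤ T) (h : hfun a₁ a₂ b₁ b₂ c₁ c₂ γ u τ ≤ 0) :
    γ * τ / u ≤ max 1 ((b₁ * M ^ 2 + c₁ * T + a₂) / (c₂ / γ)) := by
  rw [hfun_eq hγ.ne'] at h
  have hT : 0 < T := hτ.trans_le hτT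
  have hq : 0 < γ * τ / u := by positivity
  have hsq : u ^ 2 ≤ M ^ 2 := by gcongr
  have key : c₂ / γ * (γ * τ / u) ^ 2 ≤ b₁ * M ^ 2 + c₁ * T + a₂ * (γ * τ / u) := by
    generalize γ * τ / u = q at hq h ⊢
    nlinarith [mul_pos ha₁ hu, mul_pos (mul_pos hb₂ hu) hq]
  have := le_max_one_of_mul_pow_le_sum (c := ![b₁ * M ^ 2 + c₁ * T, a₂]) (b := c₂ / γ)
    (by positivity) (fun k => by fin_cases k <;> dsimp <;> positivity)
    (by simpa [Fin.sum_univ_two] using key)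
  simpa [Fin.sum_univ_two] using this

lemma abs_hfun_le {M T K : ℝ} (ha₁ : 0 < a₁) (ha₂ : 0 < a₂) (hb₁ : 0 < b₁)
    (hb₂ : 0 < b₂) (hc₁ : 0 < c₁) (hc₂ : 0 < c₂) (hγ : 0 < γ) (hu : 0 < u) (huM : u ≤ M)
    (hτ : 0 < τ) (hτT : τ ≤ T) (hK : γ * τ / u ≤ K) :
    |hfun a₁ a₂ b₁ b₂ c₁ c₂ γ u τ| ≤
      a₁ * M + b₁ * M ^ 2 + c₁ * T + K * (a₂ + b₂ * M + c₂ / γ * K) := by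
  rw [hfun_eq hγ.ne']
  have hq : 0 < γ * τ / u := by positivity
  have hc : 0 < c₂ / γ := by positivity
  generalize γ * τ / u = q at hq hK ⊢
  have hsq : u ^ 2 ≤ M ^ 2 := by gcongr
  have hqu : q * u ≤ K * M := by gcongr; linarith
  have hqq : q * q ≤ K * K := by gcongr; linarith
  rw [abs_le]
  constructor <;> nlinarith [mul_pos ha₁ hu, mul_pos (mul_pos hb₂ hu) hq,
    mul_pos hb₁ (mul_pos hu hu), mul_pos ha₂ hq, mul_pos hc (mul_pos hq hq), mul_le_mul_of_nonneg_left hqq hc.le,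
    mul_le_mul_of_nonneg_left hqu hb₂.le]

end

lemma strictConvexOn_of_hasDerivWithinAt2_pos {D : Set ℝ} (hD : Convex ℝ D) {f f' f'' : ℝ → ℝ}
    (hf : ContinuousOn f D) (hf' : ∀ x ∈ interior D, HasDerivWithinAt f (f' x) (interior D) x)
    (hf'' : ∀ x ∈ interior D, HasDerivWithinAt f' (f'' x) (interior D) x)
    (hf''₀ : ∀ x ∈ interior D, 0 < f'' x) : StrictConvexOn ℝ D f := by
  refine StrictMonoOn.strictConvexOn_of_deriv hD hf ?_
  have hmono : StrictMonoOn f' (interior D) :=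
    strictMonoOn_of_hasDerivWithinAt_pos hD.interior
      (fun x hx => (hf'' x hx).continuousWithinAt) (by rwa [interior_interior])
      (by rwa [interior_interior])
  exact hmono.congr (deriv_eqOn isOpen_interior hf').symm

lemma StrictConvexOn.lt_of_hasDerivWithinAt_zero {S : Set ℝ} {f : ℝ → ℝ} {x y : ℝ}
    (hfc : StrictConvexOn ℝ S f) (hx : x ∈ S) (hy : y ∈ S) (hxy : y ≠ x)
    (hf : HasDerivWithinAt f 0 S x) : f x < f y := by
  rcases hxy.lt_or_gt with hlt | hlt
  · have := hfc.slope_lt_of_hasDerivWithinAt hy hx hlt hf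
    rw [slope_def_field, div_neg_iff] at this
    rcases this with ⟨_, h⟩ | ⟨h, _⟩ <;> linarith
  · have := hfc.lt_slope_of_hasDerivWithinAt hx hy hlt hf
    rw [slope_def_field, div_pos_iff] at this
    rcases this with ⟨h, _⟩ | ⟨_, h⟩ <;> linarith

/-- Where `f'' > 0` near `x₀`, `f` is strictly convex with a critical point at `x₀`, which would
make `x₀` a strict local minimum. -/
lemma IsMaxOn.nonpos_of_hasDerivWithinAt2 {f f' f'' : ℝ → ℝ} {s : Set ℝ} {x₀ : ℝ}
    (hs : Convex ℝ s) (hsn : s.Nontrivial) (hx₀ : x₀ ∈ s) (hmax : IsMaxOn f s x₀)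
    (hf : ∀ x ∈ s, HasDerivWithinAt f (f' x) s x)
    (hf' : ∀ x ∈ s, HasDerivWithinAt f' (f'' x) s x)
    (hf''c : ContinuousWithinAt f'' s x₀) (hf'x₀ : f' x₀ = 0) : f'' x₀ ≤ 0 := by
  by_contra! hpos
  obtain ⟨ε, hε, hball⟩ := Metric.mem_nhdsWithin_iff.mp (hf''c (Ioi_mem_nhds hpos))
  set D := Metric.ball x₀ ε ∩ s
  have hD : Convex ℝ D := (convex_ball x₀ ε).inter hs
  have hDs : D ⊆ s := inter_subset_right
  have hint : interior D ⊆ s := interior_subset.trans hDs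
  have hconv : StrictConvexOn ℝ D f :=
    strictConvexOn_of_hasDerivWithinAt2_pos hD
      (fun x hx => ((hf x (hDs hx)).continuousWithinAt.mono hDs))
      (fun x hx => (hf x (hint hx)).mono hint) (fun x hx => (hf' x (hint hx)).mono hint)
      (fun x hx => hball (interior_subset hx))
  have hx₀D : x₀ ∈ D := ⟨Metric.mem_ball_self hε, hx₀⟩
  obtain ⟨y, ⟨hyball, hys⟩, hyx⟩ :=
    accPt_iff_nhds.mp (hs.isPreconnected.preperfect_of_nontrivial hsn x₀ hx₀) _
      (Metric.ball_mem_nhds x₀ hε)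
  have := hconv.lt_of_hasDerivWithinAt_zero hx₀D ⟨hyball, hys⟩ hyx
    (hf'x₀ ▸ (hf x₀ hx₀).mono hDs)
  exact (hmax hys).not_gt this

lemma IsMaxOn.eq_zero_of_hasDerivWithinAt_Icc {f f' : ℝ → ℝ} {a b x₀ : ℝ}
    (hx₀ : x₀ ∈ Icc a b) (hmax : IsMaxOn f (Icc a b) x₀)
    (hf : HasDerivWithinAt f (f' x₀) (Icc a b) x₀) (ha : f' a = 0) (hb : f' b = 0) :
    f' x₀ = 0 := by
  rcases hx₀.1.eq_or_lt with rfl | hax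
  · exact ha
  rcases hx₀.2.eq_or_lt with rfl | hxb
  · exact hb
  have hnhds : Icc a b ∈ nhds x₀ := Icc_mem_nhds hax hxb
  exact (hmax.isLocalMax hnhds).hasDerivAt_eq_zero (hf.hasDerivAt hnhds)

lemma IsMaxOn.nonpos_of_hasDerivWithinAt2_Icc {f f' f'' : ℝ → ℝ} {a b x₀ : ℝ} (hab : a < b)
    (hx₀ : x₀ ∈ Icc a b) (hmax : IsMaxOn f (Icc a b) x₀)
    (hf : ∀ x ∈ Icc a b, HasDerivWithinAt f (f' x) (Icc a b) x)
    (hf' : ∀ x ∈ Icc a b, HasDerivWithinAt f' (f'' x) (Icc a b) x)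
    (hf'' : ContinuousOn f'' (Icc a b)) (ha : f' a = 0) (hb : f' b = 0) : f'' x₀ ≤ 0 :=
  hmax.nonpos_of_hasDerivWithinAt2 (convex_Icc a b)
    ⟨a, left_mem_Icc.2 hab.le, b, right_mem_Icc.2 hab.le, hab.ne⟩ hx₀ hf hf' (hf'' x₀ hx₀)
    (hmax.eq_zero_of_hasDerivWithinAt_Icc hx₀ (hf x₀ hx₀) ha hb)

lemma IsMinOn.nonneg_of_hasDerivWithinAt2_Icc {f f' f'' : ℝ → ℝ} {a b x₀ : ℝ} (hab : a < b)
    (hx₀ : x₀ ∈ Icc a b) (hmin : IsMinOn f (Icc a b) x₀)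
    (hf : ∀ x ∈ Icc a b, HasDerivWithinAt f (f' x) (Icc a b) x)
    (hf' : ∀ x ∈ Icc a b, HasDerivWithinAt f' (f'' x) (Icc a b) x)
    (hf'' : ContinuousOn f'' (Icc a b)) (ha : f' a = 0) (hb : f' b = 0) : 0 ≤ f'' x₀ := by
  have := hmin.neg.nonpos_of_hasDerivWithinAt2_Icc hab hx₀ (fun x hx => (hf x hx).neg)
    (fun x hx => (hf' x hx).neg) hf''.neg (by simp [ha]) (by simp [hb])
  simpa using this

lemma le_of_intervalIntegral_sub_eq_zero {g : ℝ → ℝ} {a b c M : ℝ} (hab : a < b)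
    (hg : ContinuousOn g (Icc a b)) (hgM : ∀ x ∈ Icc a b, g x ≤ M)
    (h : ∫ x in a..b, (g x - c) = 0) : c ≤ M := by
  have hmono := intervalIntegral.integral_mono_on hab.le
    ((hg.sub continuousOn_const).intervalIntegrable_of_Icc hab.le)
    (intervalIntegrable_const (μ := MeasureTheory.volume))
    (fun x hx => sub_le_sub_right (hgM x hx) c)
  simp only [Pi.sub_apply, h, intervalIntegral.integral_const, smul_eq_mul] at hmono
  nlinarith

structure IsLimitingSolution (a₁ a₂ b₁ b₂ c₁ c₂ γ δ d τ : ℝ) (w w' w'' : ℝ → ℝ) : Prop where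
  tau_pos : 0 < τ
  hasDerivWithinAt : ∀ x ∈ Icc (0 : ℝ) 1, HasDerivWithinAt w (w' x) (Icc 0 1) x
  hasDerivWithinAt_deriv : ∀ x ∈ Icc (0 : ℝ) 1, HasDerivWithinAt w' (w'' x) (Icc 0 1) x
  continuousOn_deriv2 : ContinuousOn w'' (Icc 0 1)
  ode : ∀ x ∈ Icc (0 : ℝ) 1, d * w'' x + hfun a₁ a₂ b₁ b₂ c₁ c₂ γ (Ufun γ δ (w x) τ) τ = 0
  deriv_zero : w' 0 = 0
  deriv_one : w' 1 = 0
  integral_eq_zero :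
    ∫ x in (0 : ℝ)..1, (Ufun γ δ (w x) τ * (a₁ - b₁ * Ufun γ δ (w x) τ) - c₁ * τ) = 0

namespace IsLimitingSolution

variable {a₁ a₂ b₁ b₂ c₁ c₂ γ δ d τ : ℝ} {w w' w'' : ℝ → ℝ}

lemma continuousOn (hs : IsLimitingSolution a₁ a₂ b₁ b₂ c₁ c₂ γ δ d τ w w' w'') :
    ContinuousOn w (Icc 0 1) :=
  fun x hx => (hs.hasDerivWithinAt x hx).continuousWithinAt

lemma tau_le (hs : IsLimitingSolution a₁ a₂ b₁ b₂ c₁ c₂ γ δ d τ w w' w'') (hb₁ : 0 < b₁)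
    (hc₁ : 0 < c₁) : τ ≤ a₁ ^ 2 / (4 * b₁ * c₁) := by
  have hc : c₁ * τ ≤ a₁ ^ 2 / (4 * b₁) := by
    have hU : ContinuousOn (fun x => Ufun γ δ (w x) τ) (Icc 0 1) :=
      continuous_Ufun.comp_continuousOn hs.continuousOn
    refine le_of_intervalIntegral_sub_eq_zero (g := fun x => Ufun γ δ (w x) τ *
      (a₁ - b₁ * Ufun γ δ (w x) τ)) zero_lt_one (hU.mul (continuousOn_const.sub
        (continuousOn_const.mul hU))) (fun x _ => ?_) hs.integral_eq_zero
    rw [le_div_iff₀ (by positivity)]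
    nlinarith [sq_nonneg (2 * b₁ * Ufun γ δ (w x) τ - a₁)]
  rw [le_div_iff₀ (by positivity)] at hc ⊢
  linarith

lemma hfun_nonneg_of_isMaxOn (hs : IsLimitingSolution a₁ a₂ b₁ b₂ c₁ c₂ γ δ d τ w w' w'')
    (hd : 0 < d) {x₀ : ℝ} (hx₀ : x₀ ∈ Icc (0 : ℝ) 1)
    (hmax : IsMaxOn w (Icc 0 1) x₀) :
    0 ≤ hfun a₁ a₂ b₁ b₂ c₁ c₂ γ (Ufun γ δ (w x₀) τ) τ := by
  have := hmax.nonpos_of_hasDerivWithinAt2_Icc zero_lt_one hx₀ hs.hasDerivWithinAt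
    hs.hasDerivWithinAt_deriv hs.continuousOn_deriv2 hs.deriv_zero hs.deriv_one
  nlinarith [hs.ode x₀ hx₀]

lemma hfun_nonpos_of_isMinOn (hs : IsLimitingSolution a₁ a₂ b₁ b₂ c₁ c₂ γ δ d τ w w' w'')
    (hd : 0 < d) {x₀ : ℝ} (hx₀ : x₀ ∈ Icc (0 : ℝ) 1)
    (hmin : IsMinOn w (Icc 0 1) x₀) :
    hfun a₁ a₂ b₁ b₂ c₁ c₂ γ (Ufun γ δ (w x₀) τ) τ ≤ 0 := by
  have := hmin.nonneg_of_hasDerivWithinAt2_Icc zero_lt_one hx₀ hs.hasDerivWithinAt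
    hs.hasDerivWithinAt_deriv hs.continuousOn_deriv2 hs.deriv_zero hs.deriv_one
  nlinarith [hs.ode x₀ hx₀]

end IsLimitingSolution

theorem exists_bound_of_isLimitingSolution {a₁ a₂ b₁ b₂ c₁ c₂ γ δ : ℝ}
    (ha₁ : 0 < a₁) (ha₂ : 0 < a₂) (hb₁ : 0 < b₁) (hb₂ : 0 < b₂)
    (hc₁ : 0 < c₁) (hc₂ : 0 < c₂) (hγ : 0 < γ) (hδ : 0 < δ) :
    ∃ K H : ℝ, 0 < K ∧ 0 < H ∧ ∀ (d τ : ℝ) (w w' w'' : ℝ → ℝ), 0 < d →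
      IsLimitingSolution a₁ a₂ b₁ b₂ c₁ c₂ γ δ d τ w w' w'' → ∀ x ∈ Icc (0 : ℝ) 1,
        |w x| ≤ K ∧ |hfun a₁ a₂ b₁ b₂ c₁ c₂ γ (Ufun γ δ (w x) τ) τ| ≤ H := by
  set T := a₁ ^ 2 / (4 * b₁ * c₁)
  set M := max 1 ((γ * c₂ * T ^ 2 + γ * b₂ * T + a₁) / b₁)
  set Q := max 1 ((b₁ * M ^ 2 + c₁ * T + a₂) / (c₂ / γ))
  set K := δ * M + Q
  have hM : 0 < M := zero_lt_one.trans_le (le_max_left _ _)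
  have hQ : 0 < Q := zero_lt_one.trans_le (le_max_left _ _)
  refine ⟨K, a₁ * M + b₁ * M ^ 2 + c₁ * T + K * (a₂ + b₂ * M + c₂ / γ * K), by positivity,
    by positivity, fun d τ w w' w'' hd hs x hx => ?_⟩
  have hτ := hs.tau_pos
  have hτT : τ ≤ T := hs.tau_le hb₁ hc₁
  have hU := Ufun_pos hγ hδ hτ
  have hinv := mul_Ufun_sub_div_Ufun hγ hδ hτ
  obtain ⟨xM, hxM, hmax⟩ :=
    isCompact_Icc.exists_isMaxOn (nonempty_Icc.2 zero_le_one) hs.continuousOn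
  obtain ⟨xm, hxm, hmin⟩ :=
    isCompact_Icc.exists_isMinOn (nonempty_Icc.2 zero_le_one) hs.continuousOn
  have hUM : Ufun γ δ (w xM) τ ≤ M := le_of_hfun_nonneg ha₁ ha₂ hb₁ hb₂ hc₁ hc₂ hγ (hU _) hτ hτT
    (hs.hfun_nonneg_of_isMaxOn hd hxM hmax)
  have hUle : ∀ z ∈ Icc (0 : ℝ) 1, Ufun γ δ (w z) τ ≤ M :=
    fun z hz => (Ufun_monotone hγ hδ hτ (hmax hz)).trans hUM
  have hqm : γ * τ / Ufun γ δ (w xm) τ ≤ Q := div_le_of_hfun_nonpos ha₁ ha₂ hb₁ hb₂ hc₁ hc₂ hγ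
    (hU _) (hUle xm hxm) hτ hτT (hs.hfun_nonpos_of_isMinOn hd hxm hmin)
  have hwx : -Q ≤ w x ∧ w x ≤ δ * M := by
    have hqM : 0 < γ * τ / Ufun γ δ (w xM) τ := div_pos (by positivity) (hU _)
    have hm : w xm ≤ w x := hmin hx
    have hM : w x ≤ w xM := hmax hx
    constructor
    · linarith [hinv (w xm), mul_pos hδ (hU (w xm))]
    · nlinarith [hinv (w xM)]
  refine ⟨abs_le.2 ⟨by linarith [mul_pos hδ hM], by linarith⟩, abs_hfun_le ha₁ ha₂ hb₁ hb₂ hc₁ hc₂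
    hγ (hU _) (hUle x hx) hτ hτT ?_⟩
  nlinarith [hinv (w x), hUle x hx]

/-- `C¹` a priori bound (Corollary 4.2): for every `ε > 0` there is `C₁* > 0`,
depending only on `ε` and the data, such that every solution `(w, τ)` of the
one-dimensional limiting system with `d ≥ ε` satisfies
`max |w| + max |w'| ≤ C₁*`. -/
theorem stmt_5 (a₁ a₂ b₁ b₂ c₁ c₂ γ δ : ℝ)
    (ha₁ : 0 < a₁) (ha₂ : 0 < a₂) (hb₁ : 0 < b₁) (hb₂ : 0 < b₂)
    (hc₁ : 0 < c₁) (hc₂ : 0 < c₂) (hγ : 0 < γ) (hδ : 0 < δ) :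
    ∀ ε > 0, ∃ C₁ > 0, ∀ d : ℝ, ε ≤ d → ∀ (τ : ℝ) (w w' w'' : ℝ → ℝ), 0 < τ →
      (∀ x ∈ Icc (0:ℝ) 1, HasDerivWithinAt w (w' x) (Icc 0 1) x) →
      (∀ x ∈ Icc (0:ℝ) 1, HasDerivWithinAt w' (w'' x) (Icc 0 1) x) →
      ContinuousOn w'' (Icc 0 1) →
      (∀ x ∈ Icc (0:ℝ) 1,
        d * w'' x + hfun a₁ a₂ b₁ b₂ c₁ c₂ γ (Ufun γ δ (w x) τ) τ = 0) →
      w' 0 = 0 → w' 1 = 0 →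
      (∫ x in (0:ℝ)..1,
        (Ufun γ δ (w x) τ * (a₁ - b₁ * Ufun γ δ (w x) τ) - c₁ * τ)) = 0 →
      ∀ x ∈ Icc (0:ℝ) 1, ∀ y ∈ Icc (0:ℝ) 1, |w x| + |w' y| ≤ C₁ := by
  intro ε hε
  obtain ⟨K, H, hK, hH, hbound⟩ :=
    exists_bound_of_isLimitingSolution ha₁ ha₂ hb₁ hb₂ hc₁ hc₂ hγ hδ
  refine ⟨K + H / ε, by positivity,
    fun d hεd τ w w' w'' hτ hw hw' hw'' hode h0 h1 hint x hx y hy => ?_⟩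
  have hd : 0 < d := hε.trans_le hεd
  have hs : IsLimitingSolution a₁ a₂ b₁ b₂ c₁ c₂ γ δ d τ w w' w'' :=
    ⟨hτ, hw, hw', hw'', hode, h0, h1, hint⟩
  have hw''_le : ∀ z ∈ Icc (0 : ℝ) 1, ‖w'' z‖ ≤ H / ε := fun z hz => by
    have hdw : d * |w'' z| ≤ H := by
      rw [← abs_of_pos hd, ← abs_mul, eq_neg_of_add_eq_zero_left (hode z hz), abs_neg]
      exact (hbound d τ w w' w'' hd hs z hz).2
    rw [Real.norm_eq_abs, le_div_iff₀ hε]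
    nlinarith [abs_nonneg (w'' z)]
  have hw'_le : |w' y| ≤ H / ε := by
    have := norm_image_sub_le_of_norm_deriv_le_segment' hw'
      (fun z hz => hw''_le z (Ico_subset_Icc_self hz)) y hy
    rw [h0, sub_zero, sub_zero, Real.norm_eq_abs] at this
    nlinarith [hy.2, div_pos hH hε]
  linarith [(hbound d τ w w' w'' hd hs x hx).1]
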